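/- arXiv:0909.4598 — 2 statements merged into one kernel-verified Lean document; each statement's English description precedes it below -/
import Mathlib

section
/- Let X be a set, f : X → X, and P ⊆ X. For each point z whose forward orbit enters P, let k(z) = min{k > 0 : f^k(z) ∈ P} be the first entrance time and let L(z) be a set containing z with f^{k(z)}(L(z)) ⊆ P (the first pullback). Assume: (i) for any two such points z, z', the sets L(z) and L(z') are either disjoint or one contains the other; (ii) if L(z) is strictly contained in L(z') then k(z) > k(z'). Then for any two such points z, z': if z' ∉ L(z), the sets L(z) and L(z') are disjoint. -/
/-! A laminar pair of sets in which `L z` misses a point of `L z'` is either disjoint or strictly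
nested, `L z ⊂ L z'`. Strict nesting is impossible for first pullbacks: it would make `L z` deeper,
`k z' < k z`, while `z ∈ L z'` gives `f^[k z'] z ∈ P`, an entrance into `P` before time `k z`. -/

theorem Set.disjoint_or_ssubset_of_notMem {α : Type*} {A B : Set α} {b : α} (hbB : b ∈ B)
    (hbA : b ∉ A) (h : Disjoint A B ∨ A ⊆ B ∨ B ⊆ A) : Disjoint A B ∨ A ⊂ B := by
  rcases h with hAB | hAB | hBA
  · exact .inl hAB
  · exact .inr ⟨hAB, fun hBA => hbA (hBA hbB)⟩
  · exact absurd (hBA hbB) hbA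

theorem firstPullback_not_ssubset {X : Type*} {f : X → X} {P : Set X} {k : X → ℕ}
    {L : X → Set X} (hmem : ∀ z, z ∈ L z) (hkpos : ∀ z, 0 < k z)
    (hfirst : ∀ z, ∀ j, 0 < j → j < k z → f^[j] z ∉ P)
    (himg : ∀ z, f^[k z] '' L z ⊆ P) (hdepth : ∀ z z', L z ⊂ L z' → k z' < k z)
    (z z' : X) : ¬ L z ⊂ L z' := fun hss =>
  hfirst z (k z') (hkpos z') (hdepth z z' hss) (himg z' ⟨z, hss.subset (hmem z), rfl⟩)

theorem stmt_10 {X : Type*} (f : X → X) (P : Set X) (k : X → ℕ) (L : X → Set X)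
    (hmem : ∀ z, z ∈ L z)
    (hkpos : ∀ z, 0 < k z)
    (hfirst : ∀ z, ∀ j, 0 < j → j < k z → f^[j] z ∉ P)
    (himg : ∀ z, f^[k z] '' L z ⊆ P)
    (hnested : ∀ z z', Disjoint (L z) (L z') ∨ L z ⊆ L z' ∨ L z' ⊆ L z)
    (hdepth : ∀ z z', L z ⊂ L z' → k z' < k z) :
    ∀ z z', z' ∉ L z → Disjoint (L z) (L z') := by
  intro z z' hz'
  refine (Set.disjoint_or_ssubset_of_notMem (hmem z') hz' (hnested z z')).resolve_right ?_
  exact firstPullback_not_ssubset hmem hkpos hfirst himg hdepth z z'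
end

section
/- Let X be a set, f : X → X, and let P : ℕ → X → Set X be a family of 'puzzle pieces' satisfying: (i) x ∈ P(n, x) for all n, x; (ii) monotonicity: P(n+1, x) ⊆ P(n, x); (iii) compatibility: for all n, x, the image f(P(n+1, x)) equals P(n, f(x)); (iv) rigidity: for all n and all x, y, if y ∈ P(n, x) then P(n, y) = P(n, x). Fix points z, c and integers n ≥ 0, r ≥ 1, and suppose r is the first entrance time of z into P(n, f^r(z)), i.e. for all 0 ≤ s < r, f^s(z) ∉ P(n, f^r(z)). Then there is at most one index i with 0 ≤ i < r such that c ∈ P(n + r - i, f^i(z)). -/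
/-! If `c` lies in two pieces `P (n + r - i) (f^[i] z)` and `P (n + r - j) (f^[j] z)` with
`i < j < r`, rigidity and monotonicity put `f^[i] z` in the second piece, and pushing it forward
`r - j` times lands `f^[r - j + i] z` in `P n (f^[r] z)` with `r - j + i < r`, contradicting that
`r` is the first entrance time. -/

section Puzzle

variable {X : Type*} {P : ℕ → X → Set X}

lemma mem_symm_of_rigid (hmem : ∀ n x, x ∈ P n x) (hrigid : ∀ n x y, y ∈ P n x → P n y = P n x)
    {n : ℕ} {x y : X} (h : y ∈ P n x) : x ∈ P n y :=
  hrigid n x y h ▸ hmem n x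

lemma iterate_mem_of_image_subset {f : X → X} (hcompat : ∀ n x, f '' P (n + 1) x ⊆ P n (f x))
    (k m : ℕ) {x y : X} (h : y ∈ P (m + k) x) : f^[k] y ∈ P m (f^[k] x) := by
  induction k generalizing x y with
  | zero => exact h
  | succ k ih => exact ih (hcompat (m + k) x ⟨y, h, rfl⟩)

lemma not_lt_of_mem_of_firstEntrance {f : X → X} (hmem : ∀ n x, x ∈ P n x)
    (hmono : ∀ n x, P (n + 1) x ⊆ P n x) (hcompat : ∀ n x, f '' P (n + 1) x ⊆ P n (f x))
    (hrigid : ∀ n x y, y ∈ P n x → P n y = P n x) {z c : X} {n r : ℕ}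
    (hfirst : ∀ s, s < r → f^[s] z ∉ P n (f^[r] z)) {i j : ℕ} (hjr : j < r)
    (hci : c ∈ P (n + r - i) (f^[i] z)) (hcj : c ∈ P (n + r - j) (f^[j] z)) : ¬ i < j := by
  intro hij
  have hzc : f^[i] z ∈ P (n + r - j) c :=
    antitone_nat_of_succ_le (f := (P · c)) (fun m => hmono m c) (by omega : n + r - j ≤ n + r - i)
      (mem_symm_of_rigid hmem hrigid hci)
  have hzj : f^[i] z ∈ P (n + (r - j)) (f^[j] z) := by
    rw [show n + (r - j) = n + r - j by omega, ← hrigid _ _ _ hcj]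
    exact hzc
  have hentry := iterate_mem_of_image_subset hcompat (r - j) n hzj
  rw [← Function.iterate_add_apply, ← Function.iterate_add_apply, Nat.sub_add_cancel hjr.le]
    at hentry
  exact hfirst (r - j + i) (by omega) hentry

end Puzzle

theorem stmt_12_general {X : Type*} (f : X → X) (P : ℕ → X → Set X)
    (hmem : ∀ n x, x ∈ P n x)
    (hmono : ∀ n x, P (n + 1) x ⊆ P n x)
    (hcompat : ∀ n x, f '' P (n + 1) x = P n (f x))
    (hrigid : ∀ n x y, y ∈ P n x → P n y = P n x)
    (z c : X) (n r : ℕ)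
    (hfirst : ∀ s, s < r → f^[s] z ∉ P n (f^[r] z)) :
    ∀ i j, i < r → j < r → c ∈ P (n + r - i) (f^[i] z) →
      c ∈ P (n + r - j) (f^[j] z) → i = j := by
  intro i j hi hj hci hcj
  have hsub : ∀ n x, f '' P (n + 1) x ⊆ P n (f x) := fun n x => (hcompat n x).subset
  exact le_antisymm
    (not_lt.1 (not_lt_of_mem_of_firstEntrance hmem hmono hsub hrigid hfirst hi hcj hci))
    (not_lt.1 (not_lt_of_mem_of_firstEntrance hmem hmono hsub hrigid hfirst hj hci hcj))

theorem stmt_12 {X : Type*} (f : X → X) (P : ℕ → X → Set X)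
    (hmem : ∀ n x, x ∈ P n x)
    (hmono : ∀ n x, P (n + 1) x ⊆ P n x)
    (hcompat : ∀ n x, f '' P (n + 1) x = P n (f x))
    (hrigid : ∀ n x y, y ∈ P n x → P n y = P n x)
    (z c : X) (n r : ℕ) (hr : 1 ≤ r)
    (hfirst : ∀ s, s < r → f^[s] z ∉ P n (f^[r] z)) :
    ∀ i j, i < r → j < r → c ∈ P (n + r - i) (f^[i] z) →
      c ∈ P (n + r - j) (f^[j] z) → i = j :=
  stmt_12_general f P hmem hmono hcompat hrigid z c n r hfirst
end
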